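/- arXiv:2506.07377 — 2 statements merged into one kernel-verified Lean document; each statement's English description precedes it below -/
import Mathlib

section
/- Let T be a proper infinite rooted tree and let ρ be a density on T. Then ρ ∈ Adm(Γ_∞) if and only if Σ_e ρ(e)η(e) ≥ 1 for every η ∈ Λ, where the sum is over all edges and is taken in [0,∞]. -/
open scoped ENNReal NNReal

/-- A proper infinite rooted tree, modeled as a prefix-closed set of finite lists of
naturals in which every node has at least one and finitely many children. -/
structure PTree where
  mem : List ℕ → Prop
  root_mem : mem []
  prefix_closed : ∀ ⦃l₁ l₂ : List ℕ⦄, l₁ <+: l₂ → mem l₂ → mem l₁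
  child_exists : ∀ ⦃l⦄, mem l → ∃ a, mem (l ++ [a])
  finite_children : ∀ ⦃l⦄, mem l → {a : ℕ | mem (l ++ [a])}.Finite

/-- The initial segment of length `n` of `f : ℕ → ℕ`, as a list. -/
def seg (f : ℕ → ℕ) (n : ℕ) : List ℕ := (List.range n).map f

namespace PTree

variable (T : PTree)

/-- The edges of the tree: the nonempty lists in `T`. -/
def Edge : Type := {e : List ℕ // T.mem e ∧ e ≠ []}

/-- The family `Γ_∞` of infinite descending paths: functions all of whose
finite initial segments lie in `T`. -/
def GammaInf : Set (ℕ → ℕ) := {f | ∀ n, T.mem (seg f n)}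

/-- `ρ`-length of the infinite descending path determined by `f`: the sum of `ρ`
over the nonempty initial segments of `f`. -/
noncomputable def lenInf (ρ : List ℕ → ℝ≥0) (f : ℕ → ℕ) : ℝ≥0∞ :=
  ∑' n : ℕ, (ρ (seg f (n + 1)) : ℝ≥0∞)

/-- `ρ`-length of the finite descending path `γ_e` consisting of the nonempty
prefixes of the edge `e`. -/
noncomputable def lenFin (ρ : List ℕ → ℝ≥0) (e : List ℕ) : ℝ≥0∞ :=
  ∑ k ∈ Finset.range e.length, (ρ (e.take (k + 1)) : ℝ≥0∞)

/-- Admissible densities for the family `Γ_n` (identified with the shell `S_n`). -/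
def AdmFin (n : ℕ) : Set (List ℕ → ℝ≥0) :=
  {ρ | ∀ e : List ℕ, T.mem e → e.length = n → 1 ≤ lenFin ρ e}

/-- Admissible densities for the family `Γ_∞`. -/
def AdmInf : Set (List ℕ → ℝ≥0) :=
  {ρ | ∀ f ∈ T.GammaInf, 1 ≤ lenInf ρ f}

/-- The `p`-energy of a density `ρ` with respect to the weight `σ`. -/
noncomputable def energy (p : ℝ) (σ ρ : List ℕ → ℝ≥0) : ℝ≥0∞ :=
  ∑' e : T.Edge, (σ e.1 : ℝ≥0∞) * (ρ e.1 : ℝ≥0∞) ^ p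

/-- The `∞`-energy of a density `ρ` with respect to the weight `σ`. -/
noncomputable def energyTop (σ ρ : List ℕ → ℝ≥0) : ℝ≥0∞ :=
  ⨆ e : T.Edge, (σ e.1 : ℝ≥0∞) * (ρ e.1 : ℝ≥0∞)

/-- The `p`-modulus of the family `Γ_n`. -/
noncomputable def ModFin (p : ℝ) (σ : List ℕ → ℝ≥0) (n : ℕ) : ℝ≥0∞ :=
  ⨅ ρ ∈ T.AdmFin n, T.energy p σ ρ

/-- The `p`-modulus of the family `Γ_∞`. -/
noncomputable def ModInf (p : ℝ) (σ : List ℕ → ℝ≥0) : ℝ≥0∞ :=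
  ⨅ ρ ∈ T.AdmInf, T.energy p σ ρ

/-- The `∞`-modulus of the family `Γ_∞`. -/
noncomputable def ModTop (σ : List ℕ → ℝ≥0) : ℝ≥0∞ :=
  ⨅ ρ ∈ T.AdmInf, T.energyTop σ ρ

end PTree

namespace PTree

variable (T : PTree)

/-- The set `Λ` of unit flows from the root: nonnegative functions on edges whose
values on the first shell sum to `1` and whose value on each edge equals the sum
of the values on its children. -/
def Lambda : Set (List ℕ → ℝ≥0) :=
  {η | (∑' e : {l : List ℕ // T.mem l ∧ l.length = 1}, (η e.1 : ℝ≥0∞)) = 1 ∧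
    ∀ e : List ℕ, T.mem e → e ≠ [] →
      (∑' a : {a : ℕ // T.mem (e ++ [a])}, (η (e ++ [a.1]) : ℝ≥0∞)) = (η e : ℝ≥0∞)}

end PTree

/-!
If `η` is a unit flow, the `η`-average over the shell `S_n` of the `ρ`-lengths of the paths
`γ_e` telescopes, by flow conservation, into the `ρη`-mass of the first `n` generations. Hence if
`Σ ρη < c < 1`, every shell contains an edge `e` with `ℓ_ρ(γ_e) < c`. Such edges form a finitely
branching prefix-closed subtree reaching every generation, so Kőnig's lemma gives an infinite path
of `ρ`-length at most `c < 1`. Conversely, the unit flow concentrated on a single path `γ` has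
`Σ ρη = ℓ_ρ(γ)`.
-/

theorem seg_length (f : ℕ → ℕ) (n : ℕ) : (seg f n).length = n := by simp [seg]

theorem seg_succ (f : ℕ → ℕ) (n : ℕ) : seg f (n + 1) = seg f n ++ [f n] := by
  simp [seg, List.range_succ]

theorem mem_range_seg_iff {f : ℕ → ℕ} {l : List ℕ} :
    l ∈ Set.range (seg f) ↔ seg f l.length = l :=
  ⟨fun ⟨n, hn⟩ => hn ▸ by rw [seg_length], fun h => ⟨_, h⟩⟩

theorem append_singleton_mem_range_seg_iff {f : ℕ → ℕ} {l : List ℕ} {a : ℕ} :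
    l ++ [a] ∈ Set.range (seg f) ↔ l ∈ Set.range (seg f) ∧ f l.length = a := by
  rw [mem_range_seg_iff, mem_range_seg_iff, List.length_append, List.length_singleton, seg_succ,
    List.append_singleton_inj]

theorem List.take_append_getD_eq {α : Type*} {l : List α} {n : ℕ} (d : α)
    (h : l.length = n + 1) : l.take n ++ [l[n]?.getD d] = l := by
  have hn : n < l.length := by omega
  rw [List.getElem?_eq_getElem hn, Option.getD_some, ← List.take_succ_eq_append_getElem hn,
    List.take_of_length_le h.le]

theorem exists_forall_seg_of_isPrefixClosed {P : List ℕ → Prop}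
    (hP : ∀ ⦃l₁ l₂ : List ℕ⦄, l₁ <+: l₂ → P l₂ → P l₁)
    (hfin : ∀ l, P l → {a | P (l ++ [a])}.Finite) (hlen : ∀ n, ∃ l, P l ∧ l.length = n) :
    ∃ f : ℕ → ℕ, ∀ n, P (seg f n) := by
  let α (i : ℕ) : Type := {l : List ℕ // P l ∧ l.length = i}
  have : Subsingleton (α 0) := ⟨fun a b => Subtype.ext <| by
    rw [List.length_eq_zero_iff.mp a.2.2, List.length_eq_zero_iff.mp b.2.2]⟩
  have (i : ℕ) : Nonempty (α i) := let ⟨l, hl⟩ := hlen i; ⟨⟨l, hl⟩⟩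
  let π {i j : ℕ} (hij : i ≤ j) (b : α j) : α i :=
    ⟨b.1.take i, hP (List.take_prefix _ _) b.2.1, by simp [b.2.2, hij]⟩
  have hfiber (i : ℕ) (a : α i) : {b : α (i + 1) | π (Nat.le_add_right i 1) b = a}.Finite := by
    refine Set.Finite.of_finite_image (f := fun b => b.1[i]?.getD 0)
      ((hfin a.1 a.2.1).subset ?_) fun b hb b' hb' hbb' => Subtype.ext ?_
    · rintro _ ⟨b, rfl, rfl⟩
      simpa [π, List.take_append_getD_eq 0 b.2.2] using b.2.1
    · rw [← List.take_append_getD_eq 0 b.2.2, ← List.take_append_getD_eq 0 b'.2.2]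
      exact congrArg₂ (· ++ [·]) (congrArg Subtype.val (hb.trans hb'.symm)) hbb'
  obtain ⟨F, hF⟩ := exists_seq_forall_proj_of_forall_finite π
    (fun i a => Subtype.ext (List.take_of_length_le a.2.2.le))
    (fun i j k hij hjk a => Subtype.ext (by simp [π, List.take_take, min_eq_left hij])) hfiber
  refine ⟨fun n => (F (n + 1)).1[n]?.getD 0, fun n => ?_⟩
  suffices seg _ n = (F n).1 from this ▸ (F n).2.1
  induction n with
  | zero => exact (List.length_eq_zero_iff.mp (F 0).2.2).symm
  | succ n ih =>
    conv_rhs => rw [← List.take_append_getD_eq 0 (F (n + 1)).2.2]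
    rw [seg_succ, ih]
    exact congrArg (· ++ _) (congrArg Subtype.val (hF (Nat.le_add_right n 1))).symm

theorem ENNReal.exists_lt_of_tsum_mul_lt {ι : Type*} {w g : ι → ℝ≥0∞} {c : ℝ≥0∞}
    (hw : ∑' i, w i = 1) (h : ∑' i, w i * g i < c) : ∃ i, g i < c := by
  by_contra! hge
  refine h.not_ge ?_
  calc c = ∑' i, w i * c := by rw [ENNReal.tsum_mul_right, hw, one_mul]
    _ ≤ ∑' i, w i * g i := ENNReal.tsum_le_tsum fun i => mul_le_mul_right (hge i) _

namespace PTree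

theorem lenFin_nil (ρ : List ℕ → ℝ≥0) : lenFin ρ [] = 0 := by simp [lenFin]

theorem lenFin_append_singleton (ρ : List ℕ → ℝ≥0) (e : List ℕ) (a : ℕ) :
    lenFin ρ (e ++ [a]) = lenFin ρ e + ρ (e ++ [a]) := by
  rw [lenFin, List.length_append, List.length_singleton, Finset.sum_range_succ,
    List.take_of_length_le (by simp)]
  congr 1
  refine Finset.sum_congr rfl fun k hk => ?_
  rw [List.take_append_of_le_length (by simpa using hk)]

theorem lenFin_mono_of_prefix (ρ : List ℕ → ℝ≥0) {e e' : List ℕ} (h : e <+: e') :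
    lenFin ρ e ≤ lenFin ρ e' := by
  obtain ⟨t, rfl⟩ := h
  induction t using List.reverseRecOn with
  | nil => rw [List.append_nil]
  | append_singleton t a ih =>
    rw [← List.append_assoc, lenFin_append_singleton]
    exact ih.trans le_self_add

theorem lenFin_seg (ρ : List ℕ → ℝ≥0) (f : ℕ → ℕ) (n : ℕ) :
    lenFin ρ (seg f n) = ∑ k ∈ Finset.range n, (ρ (seg f (k + 1)) : ℝ≥0∞) := by
  induction n with
  | zero => exact lenFin_nil ρ
  | succ n ih => rw [seg_succ, lenFin_append_singleton, ih, Finset.sum_range_succ, seg_succ]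

theorem lenInf_eq_iSup_lenFin (ρ : List ℕ → ℝ≥0) (f : ℕ → ℕ) :
    lenInf ρ f = ⨆ n, lenFin ρ (seg f n) := by
  simp only [lenInf, ENNReal.tsum_eq_iSup_nat, lenFin_seg]

variable (T : PTree)

abbrev Shell (n : ℕ) : Type := {l : List ℕ // T.mem l ∧ l.length = n}

noncomputable def shellSuccEquiv (n : ℕ) :
    (Σ e : T.Shell n, {a : ℕ // T.mem (e.1 ++ [a])}) ≃ T.Shell (n + 1) :=
  Equiv.ofBijective (fun p => ⟨p.1.1 ++ [p.2.1], p.2.2, by simp [p.1.2.2]⟩) <| by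
    constructor
    · rintro ⟨⟨e, he⟩, a, ha⟩ ⟨⟨e', he'⟩, a', ha'⟩ h
      obtain ⟨rfl, rfl⟩ := List.append_singleton_inj.mp (congrArg Subtype.val h)
      rfl
    · rintro ⟨l, hl, hlen⟩
      have hne : l ≠ [] := List.ne_nil_of_length_pos (by omega)
      rw [← List.dropLast_append_getLast hne] at hl
      exact ⟨⟨⟨l.dropLast, T.prefix_closed (List.prefix_append _ _) hl, by simp [hlen]⟩,
        l.getLast hne, hl⟩, Subtype.ext (List.dropLast_append_getLast hne)⟩

theorem tsum_shell_succ (F : List ℕ → ℝ≥0∞) (n : ℕ) :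
    ∑' l : T.Shell (n + 1), F l.1 =
      ∑' e : T.Shell n, ∑' a : {a // T.mem (e.1 ++ [a])}, F (e.1 ++ [a.1]) := by
  rw [← (T.shellSuccEquiv n).tsum_eq, ENNReal.tsum_sigma']
  rfl

theorem tsum_shell_le_tsum_edge (G : List ℕ → ℝ≥0∞) :
    ∑' k, ∑' e : T.Shell (k + 1), G e.1 ≤ ∑' e : T.Edge, G e.1 := by
  refine (ENNReal.tsum_sigma' fun p : Σ k, T.Shell (k + 1) => G p.2.1).symm.trans_le ?_
  refine ENNReal.tsum_comp_le_tsum_of_injective (f := fun p : Σ k, T.Shell (k + 1) =>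
    (⟨p.2.1, p.2.2.1, List.ne_nil_of_length_pos (by simp [p.2.2.2])⟩ : T.Edge)) ?_ (G ·.1)
  rintro ⟨k, e, he⟩ ⟨k', e', he'⟩ h
  obtain rfl : e = e' := congrArg Subtype.val h
  obtain rfl : k = k' := by omega
  rfl

variable {T} {η : List ℕ → ℝ≥0}

theorem tsum_shell_succ_eq_one_of_mem_Lambda (hη : η ∈ T.Lambda) (n : ℕ) :
    ∑' e : T.Shell (n + 1), (η e.1 : ℝ≥0∞) = 1 := by
  induction n with
  | zero => exact hη.1
  | succ n ih =>
    rw [tsum_shell_succ T (η ·), ← ih]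
    exact tsum_congr fun e => hη.2 e.1 e.2.1 (List.ne_nil_of_length_pos (by simp [e.2.2]))

theorem tsum_children_mul_lenFin (hη : η ∈ T.Lambda) (ρ : List ℕ → ℝ≥0) {e : List ℕ}
    (he : T.mem e) :
    ∑' a : {a // T.mem (e ++ [a])}, (η (e ++ [a.1]) : ℝ≥0∞) * lenFin ρ (e ++ [a.1]) =
      η e * lenFin ρ e +
        ∑' a : {a // T.mem (e ++ [a])}, (ρ (e ++ [a.1]) : ℝ≥0∞) * η (e ++ [a.1]) := by
  have hconserve : (∑' a : {a // T.mem (e ++ [a])}, (η (e ++ [a.1]) : ℝ≥0∞)) * lenFin ρ e =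
      η e * lenFin ρ e := by
    -- `Λ` asks for no conservation at the root `[]`, where none is needed as `lenFin ρ [] = 0`.
    rcases eq_or_ne e [] with rfl | hne
    · simp only [lenFin_nil, mul_zero]
    · rw [hη.2 e he hne]
  calc _ = ∑' a : {a // T.mem (e ++ [a])},
        ((η (e ++ [a.1]) : ℝ≥0∞) * lenFin ρ e + ρ (e ++ [a.1]) * η (e ++ [a.1])) :=
        tsum_congr fun a => by rw [lenFin_append_singleton, mul_add, mul_comm (η _ : ℝ≥0∞) (ρ _)]
    _ = _ := by rw [ENNReal.tsum_add, ENNReal.tsum_mul_right, hconserve]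

theorem tsum_shell_mul_lenFin (hη : η ∈ T.Lambda) (ρ : List ℕ → ℝ≥0) (n : ℕ) :
    ∑' e : T.Shell n, (η e.1 : ℝ≥0∞) * lenFin ρ e.1 =
      ∑ k ∈ Finset.range n, ∑' e : T.Shell (k + 1), (ρ e.1 : ℝ≥0∞) * η e.1 := by
  induction n with
  | zero =>
    refine (tsum_congr fun e => ?_).trans tsum_zero
    rw [List.length_eq_zero_iff.mp e.2.2, lenFin_nil, mul_zero]
  | succ n ih =>
    rw [tsum_shell_succ T (fun l => η l * lenFin ρ l), Finset.sum_range_succ, ← ih,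
      tsum_shell_succ T (fun l => ρ l * η l), ← ENNReal.tsum_add]
    exact tsum_congr fun e => tsum_children_mul_lenFin hη ρ e.2.1

theorem exists_shell_lenFin_lt (hη : η ∈ T.Lambda) {ρ : List ℕ → ℝ≥0} {c : ℝ≥0∞}
    (hc : ∑' e : T.Edge, (ρ e.1 : ℝ≥0∞) * η e.1 < c) (n : ℕ) :
    ∃ e : T.Shell n, lenFin ρ e.1 < c := by
  cases n with
  | zero => exact ⟨⟨[], T.root_mem, rfl⟩, (lenFin_nil ρ).trans_lt (pos_of_gt hc)⟩
  | succ n =>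
    refine ENNReal.exists_lt_of_tsum_mul_lt (tsum_shell_succ_eq_one_of_mem_Lambda hη n)
      (lt_of_le_of_lt ?_ hc)
    rw [tsum_shell_mul_lenFin hη]
    exact (ENNReal.sum_le_tsum _).trans (T.tsum_shell_le_tsum_edge fun l => ρ l * η l)

theorem one_le_tsum_of_mem_AdmInf {ρ : List ℕ → ℝ≥0} (hρ : ρ ∈ T.AdmInf) (hη : η ∈ T.Lambda) :
    1 ≤ ∑' e : T.Edge, (ρ e.1 : ℝ≥0∞) * η e.1 := by
  by_contra! hlt
  obtain ⟨c, hSc, hc1⟩ := exists_between hlt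
  obtain ⟨f, hf⟩ := exists_forall_seg_of_isPrefixClosed (P := fun l => T.mem l ∧ lenFin ρ l < c)
    (fun l₁ l₂ h hl₂ => ⟨T.prefix_closed h hl₂.1, (lenFin_mono_of_prefix ρ h).trans_lt hl₂.2⟩)
    (fun l hl => (T.finite_children hl.1).subset fun a ha => ha.1)
    (fun n => let ⟨e, he⟩ := exists_shell_lenFin_lt hη hSc n; ⟨e.1, ⟨e.2.1, he⟩, e.2.2⟩)
  have hlen : lenInf ρ f ≤ c := (lenInf_eq_iSup_lenFin ρ f).trans_le (iSup_le fun n => (hf n).2.le)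
  exact (hρ f fun n => (hf n).1).trans hlen |>.not_gt hc1

noncomputable def pathFlow (f : ℕ → ℕ) : List ℕ → ℝ≥0 := (Set.range (seg f)).indicator 1

theorem coe_pathFlow (f : ℕ → ℕ) (l : List ℕ) :
    (pathFlow f l : ℝ≥0∞) = (Set.range (seg f)).indicator 1 l := by
  rw [pathFlow, ENNReal.coe_indicator]
  rfl

variable {f : ℕ → ℕ}

theorem pathFlow_mem_Lambda (hf : f ∈ T.GammaInf) : pathFlow f ∈ T.Lambda := by
  refine ⟨?_, fun e _ _ => ?_⟩
  · refine (tsum_eq_single ⟨seg f 1, hf 1, seg_length f 1⟩ fun e he => ?_).trans ?_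
    · refine (coe_pathFlow f e.1).trans (Set.indicator_of_notMem ?_ _)
      rw [mem_range_seg_iff, e.2.2]
      exact fun h => he (Subtype.ext h.symm)
    · rw [coe_pathFlow, Set.indicator_of_mem (Set.mem_range_self 1), Pi.one_apply]
  · simp only [coe_pathFlow]
    by_cases he : e ∈ Set.range (seg f)
    · have hchild : T.mem (e ++ [f e.length]) := by
        obtain ⟨n, hn⟩ := append_singleton_mem_range_seg_iff.mpr ⟨he, rfl⟩
        exact hn ▸ hf n
      refine (tsum_eq_single ⟨f e.length, hchild⟩ fun a ha => ?_).trans ?_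
      · exact Set.indicator_of_notMem (fun h => ha (Subtype.ext
          (append_singleton_mem_range_seg_iff.mp h).2.symm)) _
      · rw [Set.indicator_of_mem he, Set.indicator_of_mem
          (append_singleton_mem_range_seg_iff.mpr ⟨he, rfl⟩)]
        rfl
    · rw [Set.indicator_of_notMem he]
      exact (tsum_congr fun a => Set.indicator_of_notMem
        (fun h => he (append_singleton_mem_range_seg_iff.mp h).1) _).trans tsum_zero

theorem tsum_edge_mul_pathFlow (ρ : List ℕ → ℝ≥0) (hf : f ∈ T.GammaInf) :
    ∑' e : T.Edge, (ρ e.1 : ℝ≥0∞) * pathFlow f e.1 = lenInf ρ f := by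
  let γ (n : ℕ) : T.Edge :=
    ⟨seg f (n + 1), hf (n + 1), List.ne_nil_of_length_pos (by simp [seg_length])⟩
  have hγ : Function.Injective γ := fun n m h => by
    simpa [γ, seg_length] using congrArg List.length (congrArg Subtype.val h)
  refine (hγ.tsum_eq fun e he => ?_).symm.trans (tsum_congr fun n => ?_)
  · obtain ⟨n, hn⟩ := Set.mem_of_indicator_ne_zero
      (by simpa only [coe_pathFlow] using right_ne_zero_of_mul he)
    rcases n with _ | m
    · exact absurd hn.symm e.2.2
    · exact ⟨m, Subtype.ext hn⟩
  · rw [coe_pathFlow, Set.indicator_of_mem (Set.mem_range_self _), Pi.one_apply, mul_one]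

end PTree

/-- `ρ ∈ Adm(Γ_∞)` iff `Σ_e ρ(e)η(e) ≥ 1` for every `η ∈ Λ`. -/
theorem stmt6 (T : PTree) (ρ : List ℕ → ℝ≥0) :
    ρ ∈ T.AdmInf ↔
      ∀ η ∈ T.Lambda, 1 ≤ ∑' e : T.Edge, (ρ e.1 : ℝ≥0∞) * (η e.1 : ℝ≥0∞) :=
  ⟨fun hρ _ hη => PTree.one_le_tsum_of_mem_AdmInf hρ hη, fun h _ hf =>
    (h _ (PTree.pathFlow_mem_Lambda hf)).trans_eq (PTree.tsum_edge_mul_pathFlow ρ hf)⟩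
end

section
/- Let s : {1,2,...} → ℕ satisfy s_k ≥ 1 and let σ : {1,2,...} → ℝ satisfy σ_k > 0. Let p_0 ∈ (1,∞) and suppose there is ε > 0 with [p_0−ε, p_0+ε] ⊂ (1,∞) such that M_p(σ,s) > 0 for all p ∈ [p_0−ε, p_0+ε]. For each fixed index k ≥ 1, define the value of the optimal density on the k-th shell by ρ*_p(k) := (σ_k s_k / M_p(σ,s))^{-1/(p−1)} for p ∈ [p_0−ε, p_0+ε]. Then the function p ↦ ρ*_p(k) is continuous at p_0. -/
/-!
Hölder's inequality with exponents `p` and `p / (p - 1)`, together with truncations of the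
density proportional to `(s_k σ_k) ^ (-1/(p-1))`, gives the closed form `M_p = S_p ^ (1 - p)` with
`S_p = Σ_k (s_k σ_k) ^ (-1/(p-1))`; hence the optimal value on shell `k` is
`(s_k σ_k) ^ (-1/(p-1)) / S_p`. Positivity of `M_p` at the endpoints of the interval makes `S_p`
finite there. Each term is monotone in the exponent, so the two endpoint series dominate `S_p`
on the whole interval and dominated convergence makes `p ↦ S_p` continuous at `p₀`.
-/

open scoped ENNReal NNReal

/-- The radially symmetric `p`-modulus `M_p(σ, s)` of the family of infinite
descending paths in a radially symmetric infinite tree whose `k`-th shell has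
`s k` edges, each of weight `σ k`: the infimum of the `p`-energies
`Σ_k s_k σ_k ρ_k^p` over all densities `ρ` with `Σ_k ρ_k ≥ 1`. -/
noncomputable def Mmod (p : ℝ) (σ : ℕ → ℝ≥0) (s : ℕ → ℕ) : ℝ≥0∞ :=
  ⨅ ρ ∈ {ρ : ℕ → ℝ≥0 | 1 ≤ ∑' k : ℕ, (ρ k : ℝ≥0∞)},
    ∑' k : ℕ, (s k : ℝ≥0∞) * (σ k : ℝ≥0∞) * (ρ k : ℝ≥0∞) ^ p

open Filter Topology MeasureTheory Set

theorem ENNReal.inner_le_Lp_mul_Lq_tsum {ι : Type*} {p q : ℝ} (hpq : p.HolderConjugate q)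
    (f g : ι → ℝ≥0∞) :
    ∑' i, f i * g i ≤ (∑' i, f i ^ p) ^ (1 / p) * (∑' i, g i ^ q) ^ (1 / q) := by
  let _ : MeasurableSpace ι := ⊤
  simpa only [lintegral_count, Pi.mul_apply] using
    ENNReal.lintegral_mul_le_Lp_mul_Lq Measure.count hpq (f := f) (g := g)
      Measurable.of_discrete.aemeasurable Measurable.of_discrete.aemeasurable

theorem ENNReal.rpow_le_rpow_add_rpow_of_mem_Icc (w : ℝ≥0∞) {a b x : ℝ} (hx : x ∈ Icc a b) :
    w ^ x ≤ w ^ a + w ^ b := by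
  rcases le_total 1 w with hw | hw
  · exact (ENNReal.rpow_le_rpow_of_exponent_le hw hx.2).trans le_add_self
  · exact (ENNReal.rpow_le_rpow_of_exponent_ge hw hx.1).trans le_self_add

theorem ENNReal.continuous_coe_rpow_right {w : ℝ≥0} (hw : w ≠ 0) :
    Continuous fun x : ℝ => (w : ℝ≥0∞) ^ x := by
  simp_rw [← ENNReal.coe_rpow_of_ne_zero hw]
  refine ENNReal.continuous_coe.comp (continuous_iff_continuousAt.2 fun x => ?_)
  exact (NNReal.continuousAt_rpow (Or.inl hw)).comp₂ continuousAt_const continuousAt_id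

theorem ENNReal.continuousAt_tsum_rpow {ι : Type*} {w : ι → ℝ≥0} (hw : ∀ i, w i ≠ 0)
    {a b x₀ : ℝ} (hx₀ : x₀ ∈ Ioo a b) (ha : ∑' i, (w i : ℝ≥0∞) ^ a ≠ ∞)
    (hb : ∑' i, (w i : ℝ≥0∞) ^ b ≠ ∞) :
    ContinuousAt (fun x => ∑' i, (w i : ℝ≥0∞) ^ x) x₀ := by
  let _ : MeasurableSpace ι := ⊤
  have key : Tendsto (fun x => ∫⁻ i, (w i : ℝ≥0∞) ^ x ∂Measure.count) (𝓝 x₀)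
      (𝓝 (∫⁻ i, (w i : ℝ≥0∞) ^ x₀ ∂Measure.count)) := by
    refine tendsto_lintegral_filter_of_dominated_convergence
      (fun i => (w i : ℝ≥0∞) ^ a + (w i : ℝ≥0∞) ^ b)
      (Eventually.of_forall fun _ => Measurable.of_discrete) ?_ ?_ ?_
    · filter_upwards [_root_.Icc_mem_nhds hx₀.1 hx₀.2] with x hx
      exact ae_of_all _ fun i => ENNReal.rpow_le_rpow_add_rpow_of_mem_Icc _ hx
    · rw [lintegral_count, ENNReal.tsum_add]
      exact ENNReal.add_ne_top.2 ⟨ha, hb⟩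
    · exact ae_of_all _ fun i => (ENNReal.continuous_coe_rpow_right (hw i)).continuousAt
  simp only [lintegral_count] at key
  exact key

theorem ENNReal.coe_mul_rpow_rpow_neg_one_div_sub_one {w : ℝ≥0} (hw : w ≠ 0) {p : ℝ}
    (hp : 1 < p) :
    (w : ℝ≥0∞) * ((w : ℝ≥0∞) ^ (-(1 / (p - 1)))) ^ p = (w : ℝ≥0∞) ^ (-(1 / (p - 1))) := by
  have hp1 : p - 1 ≠ 0 := sub_ne_zero.2 hp.ne'
  rw [← ENNReal.rpow_mul]
  conv_lhs => enter [1]; rw [← ENNReal.rpow_one (w : ℝ≥0∞)]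
  rw [← ENNReal.rpow_add _ _ (ENNReal.coe_ne_zero.2 hw) ENNReal.coe_ne_top]
  congr 1
  field_simp
  ring

noncomputable def shellWeight (σ : ℕ → ℝ≥0) (s : ℕ → ℕ) (k : ℕ) : ℝ≥0 :=
  s k * σ k

noncomputable def shellSeries (p : ℝ) (σ : ℕ → ℝ≥0) (s : ℕ → ℕ) : ℝ≥0∞ :=
  ∑' k, (shellWeight σ s k : ℝ≥0∞) ^ (-(1 / (p - 1)))

section Modulus

variable {p : ℝ} {σ : ℕ → ℝ≥0} {s : ℕ → ℕ}

theorem coe_shellWeight (k : ℕ) : (shellWeight σ s k : ℝ≥0∞) = s k * σ k := by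
  simp [shellWeight]

theorem shellWeight_ne_zero (hs : ∀ k, s k ≠ 0) (hσ : ∀ k, σ k ≠ 0) (k : ℕ) :
    shellWeight σ s k ≠ 0 :=
  mul_ne_zero (Nat.cast_ne_zero.2 (hs k)) (hσ k)

theorem Mmod_eq_iInf :
    Mmod p σ s = ⨅ ρ ∈ {ρ : ℕ → ℝ≥0 | 1 ≤ ∑' k : ℕ, (ρ k : ℝ≥0∞)},
      ∑' k, (shellWeight σ s k : ℝ≥0∞) * (ρ k : ℝ≥0∞) ^ p := by
  simp only [Mmod, coe_shellWeight]

theorem Mmod_le_of_one_le_tsum (ρ : ℕ → ℝ≥0∞) (hρ : ∀ k, ρ k ≠ ∞) (h : 1 ≤ ∑' k, ρ k) :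
    Mmod p σ s ≤ ∑' k, (shellWeight σ s k : ℝ≥0∞) * ρ k ^ p := by
  rw [Mmod_eq_iInf]
  refine (iInf₂_le (fun k => (ρ k).toNNReal) ?_).trans_eq ?_ <;>
    simp only [Set.mem_ofPred_eq, ENNReal.coe_toNNReal (hρ _), h]

theorem shellSeries_ne_zero (hw : ∀ k, shellWeight σ s k ≠ 0) : shellSeries p σ s ≠ 0 := fun h =>
  (ENNReal.rpow_pos (ENNReal.coe_pos.2 (pos_iff_ne_zero.2 (hw 0))) ENNReal.coe_ne_top).ne'
    (ENNReal.tsum_eq_zero.1 h 0)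

theorem Mmod_le_sum_rpow (hw : ∀ k, shellWeight σ s k ≠ 0) (hp : 1 < p) (F : Finset ℕ) :
    Mmod p σ s ≤ (∑ k ∈ F, (shellWeight σ s k : ℝ≥0∞) ^ (-(1 / (p - 1)))) ^ (1 - p) := by
  set t : ℕ → ℝ≥0∞ := fun k => (shellWeight σ s k : ℝ≥0∞) ^ (-(1 / (p - 1)))
  set T := ∑ k ∈ F, t k
  have ht : ∀ k, t k ≠ ∞ := fun k =>
    ENNReal.rpow_ne_top_of_ne_zero (ENNReal.coe_ne_zero.2 (hw k)) ENNReal.coe_ne_top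
  rcases eq_or_ne T 0 with hT0 | hT0
  · rw [hT0, ENNReal.zero_rpow_of_neg (by linarith)]
    exact le_top
  have hT : T ≠ ∞ := ENNReal.sum_ne_top.2 fun k _ => ht k
  set ρ : ℕ → ℝ≥0∞ := fun k => if k ∈ F then t k / T else 0
  have hρ_top : ∀ k, ρ k ≠ ∞ := fun k => by
    by_cases hk : k ∈ F
    · simpa [ρ, hk] using ENNReal.div_ne_top (ht k) hT0
    · simp [ρ, hk]
  have hρ_sum : ∑' k, ρ k = 1 := by
    rw [tsum_eq_sum (s := F) fun k hk => if_neg hk, Finset.sum_congr rfl fun k hk => if_pos hk,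
      ← ENNReal.div_self hT0 hT]
    simp only [div_eq_mul_inv, ← Finset.sum_mul, T]
  refine (Mmod_le_of_one_le_tsum ρ hρ_top hρ_sum.ge).trans_eq ?_
  calc ∑' k, (shellWeight σ s k : ℝ≥0∞) * ρ k ^ p = ∑ k ∈ F, t k / T ^ p := by
        rw [tsum_eq_sum (s := F) fun k hk => by
          simp [ρ, hk, ENNReal.zero_rpow_of_pos (by linarith : 0 < p)]]
        refine Finset.sum_congr rfl fun k hk => ?_
        simp only [ρ, if_pos hk]
        rw [ENNReal.div_rpow_of_nonneg _ _ (by linarith), ← mul_div_assoc,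
          ENNReal.coe_mul_rpow_rpow_neg_one_div_sub_one (hw k) hp]
    _ = T ^ (1 - p) := by
        simp only [div_eq_mul_inv, ← Finset.sum_mul]
        rw [ENNReal.rpow_sub _ _ hT0 hT, ENNReal.rpow_one, div_eq_mul_inv]

/-- Hölder with exponents `p` and `p / (p - 1)`, applied to
`ρ k = (w k ^ (1/p) * ρ k) * w k ^ (-1/p)`. -/
theorem shellSeries_rpow_le_energy (hw : ∀ k, shellWeight σ s k ≠ 0) (hp : 1 < p)
    (ρ : ℕ → ℝ≥0) (hρ : 1 ≤ ∑' k, (ρ k : ℝ≥0∞)) :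
    shellSeries p σ s ^ (1 - p) ≤ ∑' k, (shellWeight σ s k : ℝ≥0∞) * (ρ k : ℝ≥0∞) ^ p := by
  set w : ℕ → ℝ≥0∞ := fun k => shellWeight σ s k
  have hw0 : ∀ k, w k ≠ 0 := fun k => ENNReal.coe_ne_zero.2 (hw k)
  have hwT : ∀ k, w k ≠ ∞ := fun k => ENNReal.coe_ne_top
  have hp0 : 0 < p := by linarith
  set S := shellSeries p σ s
  set E := ∑' k, w k * (ρ k : ℝ≥0∞) ^ p
  rcases eq_or_ne S ∞ with hS | hS
  · rw [hS, ENNReal.top_rpow_of_neg (by linarith)]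
    exact zero_le
  have hpq : p.HolderConjugate (p / (p - 1)) := .conjExponent hp
  have hHolder := ENNReal.inner_le_Lp_mul_Lq_tsum hpq
    (fun k => w k ^ (1 / p) * ρ k) (fun k => w k ^ (-(1 / p)))
  have hfg : ∀ k, w k ^ (1 / p) * ρ k * w k ^ (-(1 / p)) = ρ k := fun k => by
    rw [mul_right_comm, ← ENNReal.rpow_add _ _ (hw0 k) (hwT k), add_neg_cancel,
      ENNReal.rpow_zero, one_mul]
  have hf : ∀ k, (w k ^ (1 / p) * ρ k) ^ p = w k * (ρ k : ℝ≥0∞) ^ p := fun k => by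
    rw [ENNReal.mul_rpow_of_nonneg _ _ hp0.le, ← ENNReal.rpow_mul, one_div_mul_cancel hp0.ne',
      ENNReal.rpow_one]
  have hg : ∀ k, (w k ^ (-(1 / p))) ^ (p / (p - 1)) = w k ^ (-(1 / (p - 1))) := fun k => by
    rw [← ENNReal.rpow_mul]
    congr 1
    field_simp
  simp only [hfg, hf, hg] at hHolder
  have hEp : 1 ≤ E * S ^ (p - 1) := by
    have := ENNReal.rpow_le_rpow (hρ.trans hHolder) hp0.le
    rwa [ENNReal.one_rpow, ENNReal.mul_rpow_of_nonneg _ _ hp0.le, ← ENNReal.rpow_mul,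
      ← ENNReal.rpow_mul, one_div_mul_cancel hp0.ne', ENNReal.rpow_one,
      show 1 / (p / (p - 1)) * p = p - 1 by field_simp] at this
  rw [← neg_sub, ENNReal.rpow_neg, ENNReal.inv_le_iff_le_mul
    (fun _ => (ENNReal.rpow_pos (pos_iff_ne_zero.2 (shellSeries_ne_zero hw)) hS).ne')
    (fun h => absurd h (ENNReal.rpow_ne_top_of_nonneg (by linarith) hS)), mul_comm]
  exact hEp

theorem Mmod_eq (hw : ∀ k, shellWeight σ s k ≠ 0) (hp : 1 < p) :
    Mmod p σ s = shellSeries p σ s ^ (1 - p) := by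
  refine le_antisymm ?_ ?_
  · refine ge_of_tendsto' (x := atTop) ?_ fun N => Mmod_le_sum_rpow hw hp (Finset.range N)
    exact (ENNReal.continuous_rpow_const.tendsto _).comp (ENNReal.tendsto_nat_tsum _)
  · rw [Mmod_eq_iInf]
    exact le_iInf₂ fun ρ (hρ : 1 ≤ ∑' k, (ρ k : ℝ≥0∞)) =>
      shellSeries_rpow_le_energy hw hp ρ hρ

end Modulus

section Continuity

variable {σ : ℕ → ℝ≥0} {s : ℕ → ℕ}

theorem div_Mmod_rpow_eq (hw : ∀ k, shellWeight σ s k ≠ 0) {p : ℝ} (hp : 1 < p) (k : ℕ) :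
    ((σ k * s k : ℝ≥0∞) / Mmod p σ s) ^ (-(1 / (p - 1))) =
      (shellWeight σ s k : ℝ≥0∞) ^ (-(1 / (p - 1))) / shellSeries p σ s := by
  set S := shellSeries p σ s
  have hS : S ^ (p - 1) ≠ 0 :=
    (ENNReal.rpow_pos_of_nonneg (pos_iff_ne_zero.2 (shellSeries_ne_zero hw)) (by linarith)).ne'
  have hdiv : (shellWeight σ s k : ℝ≥0∞) / S ^ (1 - p) = shellWeight σ s k * S ^ (p - 1) := by
    rw [div_eq_mul_inv, ← ENNReal.rpow_neg, neg_sub]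
  rw [Mmod_eq hw hp, mul_comm, ← coe_shellWeight, hdiv,
    ENNReal.mul_rpow_of_ne_zero (ENNReal.coe_ne_zero.2 (hw k)) hS, ← ENNReal.rpow_mul,
    show (p - 1) * -(1 / (p - 1)) = -1 by field_simp [sub_ne_zero.2 hp.ne'],
    ENNReal.rpow_neg_one, ← div_eq_mul_inv]

theorem shellSeries_ne_top_of_Mmod_pos (hw : ∀ k, shellWeight σ s k ≠ 0) {p : ℝ} (hp : 1 < p)
    (h : 0 < Mmod p σ s) : shellSeries p σ s ≠ ∞ := fun hS => by
  rw [Mmod_eq hw hp, hS, ENNReal.top_rpow_of_neg (by linarith)] at h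
  exact h.false

theorem continuousAt_neg_one_div_sub_one {p : ℝ} (hp : p ≠ 1) :
    ContinuousAt (fun p : ℝ => -(1 / (p - 1))) p :=
  (continuousAt_const.div (continuousAt_id.sub continuousAt_const) (sub_ne_zero.2 hp)).neg

theorem continuousAt_shellSeries (hw : ∀ k, shellWeight σ s k ≠ 0) {a b p : ℝ} (ha : 1 < a)
    (hp : p ∈ Ioo a b) (ha_fin : shellSeries a σ s ≠ ∞) (hb_fin : shellSeries b σ s ≠ ∞) :
    ContinuousAt (fun p => shellSeries p σ s) p := by
  have hmono : StrictMonoOn (fun p : ℝ => -(1 / (p - 1))) (Ioi 1) := fun x hx y _ hxy =>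
    neg_lt_neg (one_div_lt_one_div_of_lt (sub_pos.2 hx) (by linarith))
  have ha_mem : a ∈ Ioi 1 := ha
  have hp_mem : p ∈ Ioi (1 : ℝ) := ha.trans hp.1
  have hx : -(1 / (p - 1)) ∈ Ioo (-(1 / (a - 1))) (-(1 / (b - 1))) :=
    ⟨hmono ha_mem hp_mem hp.1, hmono hp_mem (hp_mem.trans hp.2) hp.2⟩
  exact ContinuousAt.comp (f := fun p : ℝ => -(1 / (p - 1)))
    (ENNReal.continuousAt_tsum_rpow hw hx ha_fin hb_fin)
    (continuousAt_neg_one_div_sub_one hp_mem.ne')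

end Continuity

/-- under the hypotheses of Statement 13, for each fixed shell `k`,
the value `ρ*_p(k) = (σ_k s_k / M_p(σ,s))^{-1/(p-1)}` of the optimal density is
continuous in `p` at `p₀`. -/
theorem stmt14 (s : ℕ → ℕ) (hs : ∀ k, 1 ≤ s k) (σ : ℕ → ℝ≥0) (hσ : ∀ k, 0 < σ k)
    (p₀ ε : ℝ) (hε : 0 < ε) (h1 : 1 < p₀ - ε)
    (hpos : ∀ p ∈ Set.Icc (p₀ - ε) (p₀ + ε), 0 < Mmod p σ s) (k : ℕ) :
    ContinuousAt
      (fun p : ℝ =>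
        (((σ k : ℝ≥0∞) * (s k : ℝ≥0∞)) / Mmod p σ s) ^ (-(1 / (p - 1)))) p₀ := by
  have hw : ∀ k, shellWeight σ s k ≠ 0 :=
    shellWeight_ne_zero (fun k => Nat.one_le_iff_ne_zero.1 (hs k)) fun k => (hσ k).ne'
  have hfin : ∀ p ∈ Icc (p₀ - ε) (p₀ + ε), shellSeries p σ s ≠ ∞ := fun p hp =>
    shellSeries_ne_top_of_Mmod_pos hw (h1.trans_le hp.1) (hpos p hp)
  have hp₀ : p₀ ∈ Ioo (p₀ - ε) (p₀ + ε) := ⟨by linarith, by linarith⟩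
  have hS : ContinuousAt (fun p => shellSeries p σ s) p₀ :=
    continuousAt_shellSeries hw h1 hp₀ (hfin _ ⟨le_rfl, by linarith⟩)
      (hfin _ ⟨by linarith, le_rfl⟩)
  have hnum : ContinuousAt (fun p : ℝ => (shellWeight σ s k : ℝ≥0∞) ^ (-(1 / (p - 1)))) p₀ :=
    (ENNReal.continuous_coe_rpow_right (hw k)).continuousAt.comp
      (continuousAt_neg_one_div_sub_one (by linarith))
  have hquot : ContinuousAt
      (fun p : ℝ => (shellWeight σ s k : ℝ≥0∞) ^ (-(1 / (p - 1))) / shellSeries p σ s) p₀ :=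
    ENNReal.Tendsto.div hnum (.inr (shellSeries_ne_zero hw)) hS
      (.inl (hfin p₀ (Ioo_subset_Icc_self hp₀)))
  refine hquot.congr ?_
  filter_upwards [Ioo_mem_nhds hp₀.1 hp₀.2] with p hp
  exact (div_Mmod_rpow_eq hw (by linarith [hp.1]) k).symm
end
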